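/- Let n ≥ 1, define N(n,m) = 2^{⌊(n+1)/2⌋+1} · (2m + n − 1) · (m + n − 2)! / ((n − 1)! · m!) for m ≥ 1, let α ∈ ℕ, and let s be real with s > n/2 + α. Then there exist positive constants ĉ₃, ĉ₄ independent of a such that for all a ≥ 1, ĉ₃ · (a + (n−1)/2)^{n−2s+2α} ≤ ∑_{m=a+1}^∞ N(n,m) · (m + n/2)^{2α} / (m + (n−1)/2)^{2s} ≤ ĉ₄ · (a + (n−1)/2)^{n−2s+2α}. -/
import Mathlib


/-- The dimension `N(n,m) = 2^{⌊(n+1)/2⌋+1} (2m+n-1)(m+n-2)!/((n-1)! m!)` of the space of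
`Cl_{n+1}`-valued spherical harmonics homogeneous of degree `m ≥ 1`, as a real number. -/
noncomputable def Nf (n m : ℕ) : ℝ :=
  (2 : ℝ) ^ ((n + 1) / 2 + 1) * ((2 * m + n - 1 : ℕ) : ℝ) *
    (Nat.factorial (m + n - 2) : ℝ) /
    ((Nat.factorial (n - 1) : ℝ) * (Nat.factorial m : ℝ))

open Finset Filter Topology

/-- MVT bounds for differences of negative powers. -/
lemma rpow_mvt {q : ℝ} (hq : 0 < q) {y : ℝ} (hy : 1 ≤ y) :
    q * (y + 1) ^ (-(q + 1)) ≤ y ^ (-q) - (y + 1) ^ (-q) ∧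
      y ^ (-q) - (y + 1) ^ (-q) ≤ q * y ^ (-(q + 1)) := by
  have hy0 : (0:ℝ) < y := by linarith
  obtain ⟨c, hc, hceq⟩ := exists_hasDerivAt_eq_slope (fun t : ℝ => t ^ (-q))
      (fun t : ℝ => (-q) * t ^ (-q - 1)) (by linarith : y < y + 1)
      (fun t ht => (Real.continuousAt_rpow_const t (-q)
        (Or.inl (by have := ht.1; intro h; rw [h] at this; linarith))).continuousWithinAt)
      (fun t ht => Real.hasDerivAt_rpow_const (Or.inl (by have := ht.1; intro h; rw [h] at this; linarith)))
  have hden : y + 1 - y = 1 := by ring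
  rw [hden, div_one] at hceq
  have hcpos : 0 < c := lt_trans hy0 hc.1
  have key : y ^ (-q) - (y + 1) ^ (-q) = q * c ^ (-q - 1) := by linear_combination hceq
  have h1 : c ^ (-q - 1) ≤ y ^ (-q - 1) :=
    Real.rpow_le_rpow_of_nonpos hy0 hc.1.le (by linarith)
  have h2 : (y + 1) ^ (-q - 1) ≤ c ^ (-q - 1) :=
    Real.rpow_le_rpow_of_nonpos hcpos hc.2.le (by linarith)
  have hexp : -(q + 1) = -q - 1 := by ring
  rw [hexp]
  constructor
  · rw [key]; exact mul_le_mul_of_nonneg_left h2 hq.le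
  · rw [key]; exact mul_le_mul_of_nonneg_left h1 hq.le

/-- Telescoping sum of negative-power differences. -/
lemma tele_hasSum {q : ℝ} (hq : 0 < q) {b : ℝ} (hb : 1 ≤ b) :
    HasSum (fun k : ℕ => (b + k) ^ (-q) - (b + k + 1) ^ (-q)) (b ^ (-q)) := by
  have hnn : ∀ k : ℕ, 0 ≤ (b + k) ^ (-q) - (b + k + 1) ^ (-q) := fun k =>
    sub_nonneg.2 (Real.rpow_le_rpow_of_nonpos (by positivity) (by linarith) (by linarith))
  rw [hasSum_iff_tendsto_nat_of_nonneg hnn]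
  have hps : ∀ N : ℕ, ∑ k ∈ range N, ((b + k) ^ (-q) - (b + k + 1) ^ (-q))
      = b ^ (-q) - (b + N) ^ (-q) := by
    intro N
    have h := Finset.sum_range_sub' (fun k : ℕ => (b + k) ^ (-q)) N
    have : ∀ k : ℕ, (b + ((k:ℕ)+1 : ℕ)) ^ (-q) = (b + k + 1) ^ (-q) := by
      intro k; push_cast; ring_nf
    simp only [this] at h
    simpa using h
  simp only [hps]
  have h1 : Tendsto (fun N : ℕ => b + (N:ℝ)) atTop atTop :=
    tendsto_atTop_add_const_left _ b tendsto_natCast_atTop_atTop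
  have h2 : Tendsto (fun N : ℕ => (b + (N:ℝ)) ^ (-q)) atTop (𝓝 0) :=
    (tendsto_rpow_neg_atTop hq).comp h1
  simpa using tendsto_const_nhds.sub h2

/-- Tail sum estimate for negative powers. -/
lemma tail_bounds {p : ℝ} (hp : 1 < p) {b : ℝ} (hb : 1 ≤ b) :
    Summable (fun k : ℕ => (b + 1 + k) ^ (-p)) ∧
      (p - 1)⁻¹ * (b + 1) ^ (-(p - 1)) ≤ (∑' k : ℕ, (b + 1 + k) ^ (-p)) ∧
      (∑' k : ℕ, (b + 1 + k) ^ (-p)) ≤ (p - 1)⁻¹ * b ^ (-(p - 1)) := by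
  set q := p - 1 with hqdef
  have hq : 0 < q := by simp [hqdef]; linarith
  have hup : ∀ k : ℕ, (b + 1 + k) ^ (-p) ≤ q⁻¹ * ((b + k) ^ (-q) - (b + k + 1) ^ (-q)) := by
    intro k
    have h := (rpow_mvt hq (y := b + k) (by have : (0:ℝ) ≤ k := Nat.cast_nonneg k; linarith : (1:ℝ) ≤ b + k)).1
    have he1 : b + k + 1 = b + 1 + k := by ring
    have he2 : -(q + 1) = -p := by rw [hqdef]; ring
    rw [he1, he2] at h
    rw [← he1] at h ⊢
    calc (b + k + 1) ^ (-p) = q⁻¹ * (q * (b + k + 1) ^ (-p)) := by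
          field_simp
      _ ≤ q⁻¹ * ((b + k) ^ (-q) - (b + k + 1) ^ (-q)) := by
          apply mul_le_mul_of_nonneg_left h (by positivity)
  have hlo : ∀ k : ℕ, q⁻¹ * ((b + 1 + k) ^ (-q) - (b + 1 + k + 1) ^ (-q)) ≤ (b + 1 + k) ^ (-p) := by
    intro k
    have h := (rpow_mvt hq (y := b + 1 + k) (by have : (0:ℝ) ≤ k := Nat.cast_nonneg k; linarith : (1:ℝ) ≤ b + 1 + k)).2
    have he2 : -(q + 1) = -p := by rw [hqdef]; ring
    rw [he2] at h
    calc q⁻¹ * ((b + 1 + k) ^ (-q) - (b + 1 + k + 1) ^ (-q))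
        ≤ q⁻¹ * (q * (b + 1 + k) ^ (-p)) := mul_le_mul_of_nonneg_left h (by positivity)
      _ = (b + 1 + k) ^ (-p) := by field_simp
  have htele := tele_hasSum hq hb
  have hsum_up : Summable (fun k : ℕ => q⁻¹ * ((b + k) ^ (-q) - (b + k + 1) ^ (-q))) :=
    htele.summable.mul_left q⁻¹
  have hg : Summable (fun k : ℕ => (b + 1 + k) ^ (-p)) :=
    Summable.of_nonneg_of_le (fun k => by positivity) hup hsum_up
  have htele' := tele_hasSum hq (b := b + 1) (by linarith)
  have heq' : (fun k : ℕ => q⁻¹ * ((b + 1 + k) ^ (-q) - (b + 1 + k + 1) ^ (-q)))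
      = fun k : ℕ => q⁻¹ * ((b + 1 + k) ^ (-q) - ((b + 1) + k + 1) ^ (-q)) := rfl
  refine ⟨hg, ?_, ?_⟩
  · have := Summable.tsum_le_tsum hlo (htele'.summable.mul_left q⁻¹) hg
    calc (p - 1)⁻¹ * (b + 1) ^ (-(p - 1))
        = ∑' k : ℕ, q⁻¹ * ((b + 1 + k) ^ (-q) - (b + 1 + k + 1) ^ (-q)) := by
          rw [tsum_mul_left, htele'.tsum_eq]
      _ ≤ _ := this
  · have := Summable.tsum_le_tsum hup hg hsum_up
    calc (∑' k : ℕ, (b + 1 + k) ^ (-p)) ≤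
        ∑' k : ℕ, q⁻¹ * ((b + k) ^ (-q) - (b + k + 1) ^ (-q)) := this
      _ = (p - 1)⁻¹ * b ^ (-(p - 1)) := by rw [tsum_mul_left, htele.tsum_eq]


lemma Nf_eq (n m : ℕ) (hn : 1 ≤ n) (hm : 1 ≤ m) :
    Nf n m = (2:ℝ) ^ ((n+1)/2+1) / (Nat.factorial (n-1) : ℝ) *
      ((2*m+n-1 : ℕ) : ℝ) * (m.ascFactorial (n-1) : ℝ) / m := by
  have h1 : (m - 1).factorial * m.ascFactorial (n-1) = (m + n - 2).factorial := by
    have h := Nat.factorial_mul_ascFactorial' m (n-1) hm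
    have he : m + (n-1) - 1 = m + n - 2 := by omega
    rwa [he] at h
  have h1R : ((m + n - 2).factorial : ℝ)
      = ((m-1).factorial : ℝ) * (m.ascFactorial (n-1) : ℝ) := by
    exact_mod_cast h1.symm
  have h2n : m.factorial = m * (m-1).factorial := by
    conv_lhs => rw [show m = (m-1)+1 from by omega]
    rw [Nat.factorial_succ]
    congr 1
    omega
  have h2 : (m.factorial : ℝ) = (m : ℝ) * ((m-1).factorial : ℝ) := by exact_mod_cast h2n
  have hm0 : (m:ℝ) ≠ 0 := by positivity
  have hf1 : ((m-1).factorial : ℝ) ≠ 0 := by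
    have := (m-1).factorial_pos; positivity
  have hf2 : ((Nat.factorial (n-1)) : ℝ) ≠ 0 := by
    have := (n-1).factorial_pos; positivity
  unfold Nf
  rw [h1R, h2]
  field_simp

lemma term_bounds (n : ℕ) (hn : 1 ≤ n) (α m : ℕ) (hm : 1 ≤ m) :
    2 * ((2:ℝ) ^ ((n+1)/2+1) / (Nat.factorial (n-1) : ℝ)) / (n:ℝ) ^ (n-1+2*α) *
        ((m:ℝ) + ((n:ℝ) - 1) / 2) ^ (n-1+2*α) ≤
      Nf n m * ((m:ℝ) + (n:ℝ)/2) ^ (2*α) ∧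
    Nf n m * ((m:ℝ) + (n:ℝ)/2) ^ (2*α) ≤
      ((2:ℝ) ^ ((n+1)/2+1) / (Nat.factorial (n-1) : ℝ)) * ((n:ℝ)+1) ^ (1+2*α) * (n:ℝ) ^ (n-1) *
        ((m:ℝ) + ((n:ℝ) - 1) / 2) ^ (n-1+2*α) := by
  have hM : (1:ℝ) ≤ (m:ℝ) := by exact_mod_cast hm
  have hN : (1:ℝ) ≤ (n:ℝ) := by exact_mod_cast hn
  have hM0 : (0:ℝ) < (m:ℝ) := by linarith
  have hN0 : (0:ℝ) < (n:ℝ) := by linarith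
  have hfacpos : (0:ℝ) < (Nat.factorial (n-1) : ℝ) := by exact_mod_cast (n-1).factorial_pos
  set c : ℝ := (2:ℝ) ^ ((n+1)/2+1) / (Nat.factorial (n-1) : ℝ) with hcdef
  have hc : 0 < c := by rw [hcdef]; positivity
  have hMX : (m:ℝ) ≤ (m:ℝ) + ((n:ℝ) - 1)/2 := by linarith
  have hXpos : 0 < (m:ℝ) + ((n:ℝ) - 1)/2 := by linarith
  have hNM1 : (0:ℝ) ≤ ((n:ℝ)-1)*((m:ℝ)-1) := mul_nonneg (by linarith) (by linarith)
  have hXNM : (m:ℝ) + ((n:ℝ) - 1)/2 ≤ (n:ℝ) * (m:ℝ) := by nlinarith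
  have hcastA : ((2*m+n-1 : ℕ) : ℝ) = 2*(m:ℝ) + ((n:ℝ) - 1) := by
    have he : (2*m+n-1 : ℕ) = 2*m + (n-1) := by omega
    rw [he]
    push_cast [Nat.cast_sub hn]
    ring
  have hA1 : 2*(m:ℝ) ≤ ((2*m+n-1 : ℕ) : ℝ) := by rw [hcastA]; linarith
  have hA2 : ((2*m+n-1 : ℕ) : ℝ) ≤ ((n:ℝ)+1)*(m:ℝ) := by rw [hcastA]; nlinarith
  have hF1 : (m:ℝ) ^ (n-1) ≤ (m.ascFactorial (n-1) : ℝ) := by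
    exact_mod_cast Nat.pow_succ_le_ascFactorial m (n-1)
  have hF2 : (m.ascFactorial (n-1) : ℝ) ≤ ((n:ℝ)*(m:ℝ)) ^ (n-1) := by
    have hnat : m.ascFactorial (n-1) ≤ (m - 1 + (n-1)) ^ (n-1) := by
      have h := Nat.ascFactorial_le_pow_add (m-1) (n-1)
      rwa [show m - 1 + 1 = m from by omega] at h
    calc (m.ascFactorial (n-1) : ℝ) ≤ ((m - 1 + (n-1) : ℕ) : ℝ) ^ (n-1) := by
          exact_mod_cast hnat
      _ ≤ ((n:ℝ)*(m:ℝ)) ^ (n-1) := by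
          apply pow_le_pow_left₀ (by positivity)
          push_cast [Nat.cast_sub hn, Nat.cast_sub hm]
          nlinarith
  have hB1 : (m:ℝ) ^ (2*α) ≤ ((m:ℝ) + (n:ℝ)/2) ^ (2*α) :=
    pow_le_pow_left₀ (by positivity) (by linarith) _
  have hB2 : ((m:ℝ) + (n:ℝ)/2) ^ (2*α) ≤ (((n:ℝ)+1)*(m:ℝ)) ^ (2*α) :=
    pow_le_pow_left₀ (by positivity) (by nlinarith) _
  rw [Nf_eq n m hn hm, ← hcdef]
  constructor
  · calc 2 * c / (n:ℝ) ^ (n-1+2*α) * ((m:ℝ) + ((n:ℝ)-1)/2) ^ (n-1+2*α)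
        ≤ 2 * c / (n:ℝ) ^ (n-1+2*α) * ((n:ℝ)*(m:ℝ)) ^ (n-1+2*α) := by gcongr
      _ = c * (2*(m:ℝ)) * (m:ℝ) ^ (n-1) * (m:ℝ) ^ (2*α) / (m:ℝ) := by
          rw [mul_pow]
          field_simp
          ring
      _ ≤ c * ((2*m+n-1 : ℕ) : ℝ) * (m.ascFactorial (n-1) : ℝ) * ((m:ℝ) + (n:ℝ)/2) ^ (2*α) / (m:ℝ) := by
          gcongr
      _ = c * ((2*m+n-1 : ℕ) : ℝ) * (m.ascFactorial (n-1) : ℝ) / (m:ℝ) * ((m:ℝ) + (n:ℝ)/2) ^ (2*α) := by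
          ring
  · calc c * ((2*m+n-1 : ℕ) : ℝ) * (m.ascFactorial (n-1) : ℝ) / (m:ℝ) * ((m:ℝ) + (n:ℝ)/2) ^ (2*α)
        = c * ((2*m+n-1 : ℕ) : ℝ) * (m.ascFactorial (n-1) : ℝ) * ((m:ℝ) + (n:ℝ)/2) ^ (2*α) / (m:ℝ) := by
          ring
      _ ≤ c * (((n:ℝ)+1)*(m:ℝ)) * (((n:ℝ)*(m:ℝ)) ^ (n-1)) * ((((n:ℝ)+1)*(m:ℝ)) ^ (2*α)) / (m:ℝ) := by gcongr
      _ = c * ((n:ℝ)+1) ^ (1+2*α) * (n:ℝ) ^ (n-1) * ((m:ℝ) ^ (n-1+2*α)) := by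
          rw [mul_pow, mul_pow]
          field_simp
          ring
      _ ≤ c * ((n:ℝ)+1) ^ (1+2*α) * (n:ℝ) ^ (n-1) * ((m:ℝ) + ((n:ℝ)-1)/2) ^ (n-1+2*α) := by
          gcongr

/-- Two-sided tail estimate with the extra factor `(m + n/2)^{2α}`
coming from `α` applications of the conformal Dirac operator: for `s > n/2 + α`, the tail
`∑_{m>a} N(n,m)(m + n/2)^{2α}/(m + (n-1)/2)^{2s}` is comparable to
`(a + (n-1)/2)^{n-2s+2α}`, uniformly in `a ≥ 1`. -/
theorem Nf_tail_estimate_dirac (n : ℕ) (hn : 1 ≤ n) (α : ℕ) (s : ℝ)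
    (hs : (n : ℝ) / 2 + α < s) :
    ∃ c₃ c₄ : ℝ, 0 < c₃ ∧ 0 < c₄ ∧ ∀ a : ℕ, 1 ≤ a →
      c₃ * ((a : ℝ) + ((n : ℝ) - 1) / 2) ^ ((n : ℝ) - 2 * s + 2 * α) ≤
        (∑' m : ℕ, Nf n (a + 1 + m) * (((a + 1 + m : ℕ) : ℝ) + (n : ℝ) / 2) ^ (2 * α) /
          (((a + 1 + m : ℕ) : ℝ) + ((n : ℝ) - 1) / 2) ^ (2 * s)) ∧
      (∑' m : ℕ, Nf n (a + 1 + m) * (((a + 1 + m : ℕ) : ℝ) + (n : ℝ) / 2) ^ (2 * α) /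
          (((a + 1 + m : ℕ) : ℝ) + ((n : ℝ) - 1) / 2) ^ (2 * s)) ≤
        c₄ * ((a : ℝ) + ((n : ℝ) - 1) / 2) ^ ((n : ℝ) - 2 * s + 2 * α) := by
  have hN1 : (1:ℝ) ≤ (n:ℝ) := by exact_mod_cast hn
  have hfacpos : (0:ℝ) < (Nat.factorial (n-1) : ℝ) := by exact_mod_cast (n-1).factorial_pos
  set c : ℝ := (2:ℝ) ^ ((n+1)/2+1) / (Nat.factorial (n-1) : ℝ) with hcdef
  have hc : 0 < c := by rw [hcdef]; positivity
  set r : ℕ := n - 1 + 2*α with hrdef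
  have hrR : (r:ℝ) = (n:ℝ) - 1 + 2*(α:ℝ) := by
    rw [hrdef]; push_cast [Nat.cast_sub hn]; ring
  set p : ℝ := 2*s - (r:ℝ) with hpdef
  have hp : 1 < p := by rw [hpdef, hrR]; linarith
  set K₁ : ℝ := 2 * c / (n:ℝ) ^ r with hK1
  set K₂ : ℝ := c * ((n:ℝ)+1) ^ (1+2*α) * (n:ℝ) ^ (n-1) with hK2
  have hK1pos : 0 < K₁ := by rw [hK1]; positivity
  have hK2pos : 0 < K₂ := by rw [hK2]; positivity
  have hqpos : 0 < p - 1 := by linarith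
  refine ⟨K₁ * ((p-1)⁻¹ * (2:ℝ) ^ (-(p-1))), K₂ * (p-1)⁻¹, ?_, ?_, ?_⟩
  · have h2 : (0:ℝ) < (2:ℝ) ^ (-(p-1)) := Real.rpow_pos_of_pos (by norm_num) _
    positivity
  · positivity
  intro a ha
  set b : ℝ := (a:ℝ) + ((n:ℝ)-1)/2 with hbdef
  have ha1 : (1:ℝ) ≤ (a:ℝ) := by exact_mod_cast ha
  have hb : 1 ≤ b := by rw [hbdef]; linarith
  have hbpos : (0:ℝ) < b := by linarith
  have hexp : (n:ℝ) - 2*s + 2*(α:ℝ) = -(p - 1) := by rw [hpdef, hrR]; ring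
  have hXk : ∀ k : ℕ, ((a+1+k : ℕ):ℝ) + ((n:ℝ)-1)/2 = b + 1 + (k:ℝ) := by
    intro k; rw [hbdef]; push_cast; ring
  have hXpos : ∀ k : ℕ, (0:ℝ) < b + 1 + (k:ℝ) := by
    intro k; have : (0:ℝ) ≤ (k:ℝ) := Nat.cast_nonneg k; linarith
  have hpow_eq : ∀ k : ℕ, (b+1+(k:ℝ)) ^ r / (b+1+(k:ℝ)) ^ (2*s) = (b+1+(k:ℝ)) ^ (-p) := by
    intro k
    rw [← Real.rpow_natCast (b+1+(k:ℝ)) r, ← Real.rpow_sub (hXpos k)]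
    congr 1
    rw [hpdef]; ring
  have hlowk : ∀ k : ℕ, K₁ * (b+1+(k:ℝ)) ^ (-p) ≤
      Nf n (a+1+k) * (((a+1+k : ℕ):ℝ) + (n:ℝ)/2) ^ (2*α) /
        (((a+1+k : ℕ):ℝ) + ((n:ℝ)-1)/2) ^ (2*s) := by
    intro k
    have h := (term_bounds n hn α (a+1+k) (by omega)).1
    rw [← hcdef, ← hrdef, ← hK1, hXk k] at h
    rw [hXk k]
    calc K₁ * (b+1+(k:ℝ)) ^ (-p) = K₁ * (b+1+(k:ℝ)) ^ r / (b+1+(k:ℝ)) ^ (2*s) := by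
          rw [← hpow_eq k, mul_div_assoc]
      _ ≤ _ := by
          exact (div_le_div_iff_of_pos_right (Real.rpow_pos_of_pos (hXpos k) _)).2 h
  have hupk : ∀ k : ℕ,
      Nf n (a+1+k) * (((a+1+k : ℕ):ℝ) + (n:ℝ)/2) ^ (2*α) /
        (((a+1+k : ℕ):ℝ) + ((n:ℝ)-1)/2) ^ (2*s) ≤ K₂ * (b+1+(k:ℝ)) ^ (-p) := by
    intro k
    have h := (term_bounds n hn α (a+1+k) (by omega)).2
    rw [← hcdef, ← hrdef, ← hK2, hXk k] at h
    rw [hXk k]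
    calc _ ≤ K₂ * (b+1+(k:ℝ)) ^ r / (b+1+(k:ℝ)) ^ (2*s) := by
          exact (div_le_div_iff_of_pos_right (Real.rpow_pos_of_pos (hXpos k) _)).2 h
      _ = K₂ * (b+1+(k:ℝ)) ^ (-p) := by rw [mul_div_assoc, hpow_eq k]
  obtain ⟨hgsum, hglo, hghi⟩ := tail_bounds hp hb
  have hTnn : ∀ k : ℕ, 0 ≤ Nf n (a+1+k) * (((a+1+k : ℕ):ℝ) + (n:ℝ)/2) ^ (2*α) /
      (((a+1+k : ℕ):ℝ) + ((n:ℝ)-1)/2) ^ (2*s) := fun k =>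
    le_trans (mul_nonneg hK1pos.le (Real.rpow_nonneg (hXpos k).le _)) (hlowk k)
  have hTsum : Summable (fun k : ℕ => Nf n (a+1+k) * (((a+1+k : ℕ):ℝ) + (n:ℝ)/2) ^ (2*α) /
      (((a+1+k : ℕ):ℝ) + ((n:ℝ)-1)/2) ^ (2*s)) :=
    Summable.of_nonneg_of_le hTnn hupk (hgsum.mul_left K₂)
  rw [hexp]
  constructor
  · have h1 : (2*b) ^ (-(p-1)) ≤ (b+1) ^ (-(p-1)) :=
      Real.rpow_le_rpow_of_nonpos (by linarith) (by linarith) (by linarith)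
    have h2 : (2*b) ^ (-(p-1)) = (2:ℝ) ^ (-(p-1)) * b ^ (-(p-1)) :=
      Real.mul_rpow (by norm_num) hbpos.le
    have h3 : (2:ℝ) ^ (-(p-1)) * b ^ (-(p-1)) ≤ (b+1) ^ (-(p-1)) := h2 ▸ h1
    have hnn : (0:ℝ) ≤ K₁ * (p-1)⁻¹ := by positivity
    calc K₁ * ((p-1)⁻¹ * (2:ℝ) ^ (-(p-1))) * b ^ (-(p-1))
        = K₁ * (p-1)⁻¹ * ((2:ℝ) ^ (-(p-1)) * b ^ (-(p-1))) := by ring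
      _ ≤ K₁ * (p-1)⁻¹ * (b+1) ^ (-(p-1)) := mul_le_mul_of_nonneg_left h3 hnn
      _ = K₁ * ((p-1)⁻¹ * (b+1) ^ (-(p-1))) := by ring
      _ ≤ K₁ * (∑' k : ℕ, (b+1+(k:ℝ)) ^ (-p)) := mul_le_mul_of_nonneg_left hglo hK1pos.le
      _ = ∑' k : ℕ, K₁ * (b+1+(k:ℝ)) ^ (-p) := tsum_mul_left.symm
      _ ≤ _ := Summable.tsum_le_tsum hlowk (hgsum.mul_left K₁) hTsum
  · calc _ ≤ ∑' k : ℕ, K₂ * (b+1+(k:ℝ)) ^ (-p) :=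
        Summable.tsum_le_tsum hupk hTsum (hgsum.mul_left K₂)
      _ = K₂ * ∑' k : ℕ, (b+1+(k:ℝ)) ^ (-p) := tsum_mul_left
      _ ≤ K₂ * ((p-1)⁻¹ * b ^ (-(p-1))) := mul_le_mul_of_nonneg_left hghi hK2pos.le
      _ = K₂ * (p-1)⁻¹ * b ^ (-(p-1)) := by ring
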